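/- arXiv:1701.07207 — 16 statements merged into one kernel-verified Lean document; each statement's English description precedes it below -/
import Mathlib

section
/- Let R be a commutative ring with a multiplicative subset S such that R is S-Noetherian. Let T be the ring of 2×2 upper triangular matrices over R and S' = { diag(s, s) : s ∈ S } ⊆ T. Then T is right S'-Noetherian. -/
open MulOpposite

/-- `N` is an `S`-finite submodule of the right `R`-module `M`
(where right `R`-modules are modeled as `R`ᵐᵒᵖ-modules, so that
`(op s) • n = n * s` when `M = R`). -/
def SFinite {R : Type*} [Ring R] {M : Type*} [AddCommGroup M] [Module Rᵐᵒᵖ M]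
    (S : Set R) (N : Submodule Rᵐᵒᵖ M) : Prop :=
  ∃ s ∈ S, ∃ F : Submodule Rᵐᵒᵖ M, F.FG ∧ F ≤ N ∧ ∀ n ∈ N, (op s) • n ∈ F

/-- The ring of 2×2 upper triangular matrices over `R`. -/
def upperTri (R : Type*) [CommRing R] : Subring (Matrix (Fin 2) (Fin 2) R) where
  carrier := {A | A 1 0 = 0}
  mul_mem' {A B} hA hB := by
    show (A * B) 1 0 = 0
    simp only [Set.mem_setOf_eq] at hA hB
    simp [Matrix.mul_apply, Fin.sum_univ_two, hA, hB]
  one_mem' := by simp [Set.mem_setOf_eq, Matrix.one_apply]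
  add_mem' {A B} hA hB := by
    simp only [Set.mem_setOf_eq] at *
    simp [Matrix.add_apply, hA, hB]
  zero_mem' := by simp
  neg_mem' {A} hA := by
    simp only [Set.mem_setOf_eq] at *
    simp [hA]


/-! Right multiplication by the scalar matrix `diag(s, s)` is the `R`-module action `A ↦ s • A`,
so a right ideal of `T` is in particular an `R`-submodule of `T`, and `T` is a quotient of `R³`.
`S`-Noetherianity passes from `R` to `R³` by the usual extension argument (lift the first
coordinates, then absorb the remainder in the kernel, at the cost of multiplying the two elements
of `S`) and from there to quotients. An `S`-finite witness for `I` as an `R`-submodule then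
generates a witness for `I` as a right ideal. -/

namespace Submodule

def IsSFinite {R A M : Type*} [Semiring A] [AddCommMonoid M] [Module A M] [SMul R M]
    (S : Set R) (N : Submodule A M) : Prop :=
  ∃ s ∈ S, ∃ F : Submodule A M, F.FG ∧ F ≤ N ∧ ∀ n ∈ N, s • n ∈ F

theorem IsSFinite.of_restrictScalars {R A M : Type*} [Semiring R] [Semiring A] [AddCommMonoid M]
    [Module R M] [Module A M] [SMul R A] [IsScalarTower R A M] {S : Set R} {N : Submodule A M}
    (h : (N.restrictScalars R).IsSFinite S) : N.IsSFinite S := by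
  obtain ⟨s, hs, F, ⟨G, rfl⟩, hFN, hNF⟩ := h
  refine ⟨s, hs, span A G, ⟨G, rfl⟩, span_le.2 fun g hg ↦ hFN (subset_span hg), fun n hn ↦ ?_⟩
  exact span_le_restrictScalars R A _ (hNF n hn)

theorem FG.exists_fg_le_map_eq {R M P : Type*} [Semiring R] [AddCommMonoid M] [AddCommMonoid P]
    [Module R M] [Module R P] {f : M →ₗ[R] P} {N : Submodule R M} {F : Submodule R P}
    (hF : F.FG) (hFN : F ≤ N.map f) : ∃ G : Submodule R M, G.FG ∧ G ≤ N ∧ G.map f = F := by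
  classical
  obtain ⟨t, rfl⟩ := hF
  obtain ⟨u, huN, rfl⟩ := Finset.subset_set_image_iff.1 fun x hx ↦ hFN (subset_span hx)
  exact ⟨span R u, ⟨u, rfl⟩, span_le.2 huN, by rw [map_span, Finset.coe_image]⟩

end Submodule

open Submodule

def IsSNoetherianModule {R : Type*} (S : Set R) (M : Type*) [Semiring R] [AddCommMonoid M]
    [Module R M] : Prop :=
  ∀ N : Submodule R M, N.IsSFinite S

namespace IsSNoetherianModule

variable {R M P : Type*} {S : Set R}

theorem of_surjective [Semiring R] [AddCommMonoid M] [AddCommMonoid P] [Module R M] [Module R P]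
    (h : IsSNoetherianModule S M) {f : M →ₗ[R] P} (hf : Function.Surjective f) :
    IsSNoetherianModule S P := by
  intro N
  obtain ⟨s, hs, F, hF, hFN, hNF⟩ := h (N.comap f)
  refine ⟨s, hs, F.map f, hF.map f, map_le_iff_le_comap.2 hFN, fun n hn ↦ ?_⟩
  obtain ⟨m, rfl⟩ := hf n
  rw [← f.map_smul]
  exact mem_map_of_mem (hNF m hn)

theorem prod [Ring R] [AddCommGroup M] [AddCommGroup P] [Module R M] [Module R P]
    (hS : ∀ a ∈ S, ∀ b ∈ S, a * b ∈ S) (hM : IsSNoetherianModule S M)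
    (hP : IsSNoetherianModule S P) : IsSNoetherianModule S (M × P) := by
  intro N
  obtain ⟨s₁, hs₁, F₁, hF₁, hF₁N, hNF₁⟩ := hM (N.map (LinearMap.fst R M P))
  obtain ⟨s₂, hs₂, F₂, hF₂, hF₂N, hNF₂⟩ := hP (N.comap (LinearMap.inr R M P))
  obtain ⟨G, hG, hGN, hGF₁⟩ := hF₁.exists_fg_le_map_eq hF₁N
  refine ⟨s₂ * s₁, hS _ hs₂ _ hs₁, G ⊔ F₂.map (LinearMap.inr R M P), hG.sup (hF₂.map _),
    sup_le hGN (map_le_iff_le_comap.2 hF₂N), fun n hn ↦ ?_⟩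
  obtain ⟨g, hg, hgn : g.1 = s₁ • n.1⟩ : s₁ • n.1 ∈ G.map (LinearMap.fst R M P) :=
    hGF₁ ▸ hNF₁ _ (mem_map_of_mem hn)
  have hker : s₁ • n.2 - g.2 ∈ N.comap (LinearMap.inr R M P) := by
    have : (0, s₁ • n.2 - g.2) = s₁ • n - g := by ext <;> simp [hgn]
    simpa [this] using N.sub_mem (N.smul_mem s₁ hn) (hGN hg)
  have hsplit : (s₂ * s₁) • n = s₂ • g + LinearMap.inr R M P (s₂ • (s₁ • n.2 - g.2)) := by
    ext <;> simp [hgn, mul_smul, smul_sub]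
  rw [hsplit]
  exact add_mem (mem_sup_left (G.smul_mem s₂ hg)) (mem_sup_right (mem_map_of_mem (hNF₂ _ hker)))

end IsSNoetherianModule

namespace upperTri

variable {R : Type*} [CommRing R]

theorem algebraMap_mem (r : R) : algebraMap R (Matrix (Fin 2) (Fin 2) R) r ∈ upperTri R := by
  show algebraMap R (Matrix (Fin 2) (Fin 2) R) r 1 0 = 0
  simp [Algebra.algebraMap_eq_smul_one]

instance : Algebra R (upperTri R) :=
  ((algebraMap R _).codRestrict (upperTri R) algebraMap_mem).toAlgebra' fun r A ↦
    Subtype.ext (Algebra.commutes r (A : Matrix (Fin 2) (Fin 2) R))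

theorem coe_algebraMap (r : R) :
    ((algebraMap R (upperTri R) r : upperTri R) : Matrix (Fin 2) (Fin 2) R) = r • 1 :=
  Algebra.algebraMap_eq_smul_one r

@[simp] theorem coe_smul (r : R) (A : upperTri R) :
    ((r • A : upperTri R) : Matrix (Fin 2) (Fin 2) R) = r • (A : Matrix (Fin 2) (Fin 2) R) :=
  (Algebra.smul_def r (A : Matrix (Fin 2) (Fin 2) R)).symm

def ofEntries : R × R × R →ₗ[R] upperTri R where
  toFun x := ⟨!![x.1, x.2.1; 0, x.2.2], rfl⟩
  map_add' x y := by ext i j; fin_cases i <;> fin_cases j <;> simp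
  map_smul' r x := by ext i j; fin_cases i <;> fin_cases j <;> simp

theorem ofEntries_surjective : Function.Surjective (ofEntries (R := R)) := fun A ↦
  ⟨(A.1 0 0, A.1 0 1, A.1 1 1), by
    ext i j; fin_cases i <;> fin_cases j <;> simp [ofEntries, A.2.symm]⟩

theorem isSNoetherianModule {S : Set R} (hS : ∀ a ∈ S, ∀ b ∈ S, a * b ∈ S)
    (hR : IsSNoetherianModule S R) : IsSNoetherianModule S (upperTri R) :=
  (hR.prod hS (hR.prod hS hR)).of_surjective ofEntries_surjective

end upperTri

theorem upperTri_S_noetherian_general {R : Type*} [CommRing R] (S : Set R)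
    (hSmul : ∀ a ∈ S, ∀ b ∈ S, a * b ∈ S)
    (hSN : ∀ I : Ideal R, ∃ s ∈ S, ∃ J : Ideal R, J.FG ∧ J ≤ I ∧ ∀ x ∈ I, x * s ∈ J) :
    ∀ I : Submodule (upperTri R)ᵐᵒᵖ (upperTri R),
      SFinite {t : upperTri R | ∃ s ∈ S,
        (t : Matrix (Fin 2) (Fin 2) R) = s • (1 : Matrix (Fin 2) (Fin 2) R)} I := by
  intro I
  have hR : IsSNoetherianModule S R := fun J ↦ by
    obtain ⟨s, hs, F, hF, hFJ, hJF⟩ := hSN J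
    exact ⟨s, hs, F, hF, hFJ, fun x hx ↦ by simpa [mul_comm] using hJF x hx⟩
  obtain ⟨s, hs, F, hF, hFI, hIF⟩ :=
    (upperTri.isSNoetherianModule hSmul hR (I.restrictScalars R)).of_restrictScalars
  refine ⟨algebraMap R (upperTri R) s, ⟨s, hs, upperTri.coe_algebraMap s⟩, F, hF, hFI,
    fun A hA ↦ ?_⟩
  rw [op_smul_eq_mul, ← Algebra.commutes, ← Algebra.smul_def]
  exact hIF A hA

theorem upperTri_S_noetherian {R : Type*} [CommRing R] (S : Set R)
    (hS1 : (1 : R) ∈ S) (hSmul : ∀ a ∈ S, ∀ b ∈ S, a * b ∈ S)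
    (hSN : ∀ I : Ideal R, ∃ s ∈ S, ∃ J : Ideal R, J.FG ∧ J ≤ I ∧ ∀ x ∈ I, x * s ∈ J) :
    ∀ I : Submodule (upperTri R)ᵐᵒᵖ (upperTri R),
      SFinite {t : upperTri R | ∃ s ∈ S,
        (t : Matrix (Fin 2) (Fin 2) R) = s • (1 : Matrix (Fin 2) (Fin 2) R)} I :=
  upperTri_S_noetherian_general S hSmul hSN
end

section
/- Let S be a multiplicative subset of a ring R. The family of all S-finite right ideals of R is a right Oka family. -/
open MulOpposite

/-- For a right ideal `I` and `a ∈ R`, the right ideal `a⁻¹I = {r : a * r ∈ I}`. -/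
def leftDiv {R : Type*} [Ring R] (a : R) (I : Submodule Rᵐᵒᵖ R) : Submodule Rᵐᵒᵖ R where
  carrier := {r | a * r ∈ I}
  add_mem' {x y} hx hy := by simpa [mul_add] using I.add_mem hx hy
  zero_mem' := by simp
  smul_mem' c x hx := by
    simpa [Set.mem_setOf_eq, MulOpposite.smul_eq_mul_unop, ← mul_assoc] using I.smul_mem c hx

/-- A family `F` of right ideals of `R` is a right Oka family if `R ∈ F` and
whenever `I + aR ∈ F` and `a⁻¹I ∈ F`, also `I ∈ F`. -/
def IsRightOka {R : Type*} [Ring R] (F : Set (Submodule Rᵐᵒᵖ R)) : Prop :=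
  ⊤ ∈ F ∧ ∀ (I : Submodule Rᵐᵒᵖ R) (a : R),
    I ⊔ Submodule.span Rᵐᵒᵖ {a} ∈ F → leftDiv a I ∈ F → I ∈ F

/-- Left multiplication by `a` as an `Rᵐᵒᵖ`-linear map. -/
def lmul {R : Type*} [Ring R] (a : R) : R →ₗ[Rᵐᵒᵖ] R where
  toFun x := a * x
  map_add' x y := mul_add a x y
  map_smul' c x := by simp [MulOpposite.smul_eq_mul_unop, mul_assoc]

theorem sFinite_isRightOka {R : Type*} [Ring R] (S : Set R)
    (hS1 : (1 : R) ∈ S) (hSmul : ∀ a ∈ S, ∀ b ∈ S, a * b ∈ S) :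
    IsRightOka {I : Submodule Rᵐᵒᵖ R | SFinite S I} := by
  constructor
  · refine ⟨1, hS1, ⊤, ?_, le_rfl, fun n _ => trivial⟩
    refine ⟨{1}, ?_⟩
    rw [eq_top_iff]
    intro x _
    rw [Finset.coe_singleton, Submodule.mem_span_singleton]
    exact ⟨op x, by simp [MulOpposite.smul_eq_mul_unop]⟩
  · rintro I a ⟨s₁, hs₁S, F₁, hF₁fg, hF₁le, hF₁⟩ ⟨s₂, hs₂S, F₂, hF₂fg, hF₂le, hF₂⟩
    obtain ⟨T, hT⟩ := hF₁fg
    have hdec : ∀ g ∈ (T : Set R), ∃ x ∈ I, ∃ r : R, g = x + a * r := by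
      intro g hg
      have hgm : g ∈ I ⊔ Submodule.span Rᵐᵒᵖ {a} :=
        hF₁le (hT ▸ Submodule.subset_span hg)
      rw [Submodule.mem_sup] at hgm
      obtain ⟨y, hy, z, hz, hyz⟩ := hgm
      rw [Submodule.mem_span_singleton] at hz
      obtain ⟨c, hc⟩ := hz
      exact ⟨y, hy, unop c, by rw [← hyz, ← hc, MulOpposite.smul_eq_mul_unop]⟩
    choose! x hxI r hxr using hdec
    set X : Set R := x '' (T : Set R) with hX
    set F : Submodule Rᵐᵒᵖ R := Submodule.span Rᵐᵒᵖ X ⊔ F₂.map (lmul a) with hF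
    have hspanXle : Submodule.span Rᵐᵒᵖ X ≤ I := by
      rw [Submodule.span_le]
      rintro _ ⟨g, hg, rfl⟩
      exact hxI g hg
    refine ⟨s₁ * s₂, hSmul s₁ hs₁S s₂ hs₂S, F, ?_, ?_, ?_⟩
    · classical
      refine Submodule.FG.sup ⟨T.image x, ?_⟩ (hF₂fg.map _)
      simp [X]
    · refine sup_le hspanXle ?_
      rintro _ ⟨t, ht, rfl⟩
      exact hF₂le ht
    · intro n hn
      -- n * s₁ ∈ F₁ = span T ≤ span X ⊔ range (lmul a)
      have h1 : op s₁ • n ∈ Submodule.span Rᵐᵒᵖ X ⊔ LinearMap.range (lmul a) := by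
        have hns : op s₁ • n ∈ F₁ := hF₁ n (Submodule.mem_sup_left hn)
        rw [← hT] at hns
        refine Submodule.span_le.mpr ?_ hns
        intro g hg
        rw [hxr g hg]
        exact Submodule.add_mem _ (Submodule.mem_sup_left (Submodule.subset_span ⟨g, hg, rfl⟩))
          (Submodule.mem_sup_right ⟨r g, rfl⟩)
      rw [Submodule.mem_sup] at h1
      obtain ⟨v, hv, w, hw, hvw⟩ := h1
      obtain ⟨t, ht⟩ := hw
      have hns₁I : op s₁ • n ∈ I := I.smul_mem _ hn
      have hatI : a * t ∈ I := by
        have : a * t = op s₁ • n - v := by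
          rw [← hvw, ← ht]; simp [lmul]
        rw [this]
        exact I.sub_mem hns₁I (hspanXle hv)
      have hts₂ : op s₂ • t ∈ F₂ := hF₂ t hatI
      have key : op (s₁ * s₂) • n = op s₂ • v + a * (t * s₂) := by
        have h2 : op (s₁ * s₂) • n = op s₂ • (op s₁ • n) := by
          simp [MulOpposite.smul_eq_mul_unop, mul_assoc]
        rw [h2, ← hvw, ← ht]
        simp [lmul, MulOpposite.smul_eq_mul_unop, mul_add, mul_assoc]
      rw [key]
      refine Submodule.add_mem _ (Submodule.mem_sup_left (Submodule.smul_mem _ _ hv))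
        (Submodule.mem_sup_right ⟨t * s₂, ?_, ?_⟩)
      · simpa [MulOpposite.smul_eq_mul_unop] using hts₂
      · simp [lmul]
end

section
/- Let S be a multiplicative subset of a ring R. If the union I of a nonempty chain of non-S-finite right ideals of R is a right ideal, then I is not S-finite; i.e., the complement of the family of S-finite right ideals is closed under unions of nonempty chains. -/
open MulOpposite

theorem union_chain_not_SFinite {R : Type*} [Ring R] (S : Set R)
    (hS1 : (1 : R) ∈ S) (hSmul : ∀ a ∈ S, ∀ b ∈ S, a * b ∈ S)
    (C : Set (Submodule Rᵐᵒᵖ R)) (hne : C.Nonempty) (hchain : IsChain (· ≤ ·) C)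
    (hC : ∀ J ∈ C, ¬ SFinite S J)
    (I : Submodule Rᵐᵒᵖ R) (hI : (I : Set R) = ⋃ J ∈ C, (J : Set R)) :
    ¬ SFinite S I := by
  rintro ⟨s, hs, F, ⟨T, hspan⟩, hFI, hmul⟩
  have hTI : (T : Set R) ⊆ ⋃ J ∈ C, (J : Set R) := by
    rw [← hI]
    exact (Submodule.subset_span.trans (hspan ▸ hFI : (Submodule.span Rᵐᵒᵖ (T : Set R) : Set R) ⊆ I))
  haveI : Nonempty C := hne.to_subtype
  have hdir : Directed (· ≤ ·) (fun J : C => (J : Submodule Rᵐᵒᵖ R)) :=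
    hchain.directedOn.directed_val
  have hTI' : (T : Set R) ⊆ ⋃ J : C, ((J : Submodule Rᵐᵒᵖ R) : Set R) := by
    rwa [Set.biUnion_eq_iUnion] at hTI
  obtain ⟨⟨J, hJC⟩, hTJ⟩ :=
    hdir.exists_mem_subset_of_finset_subset_biUnion hTI'
  have hJI : J ≤ I := fun x hx => by
    have : x ∈ (I : Set R) := hI ▸ Set.mem_biUnion hJC hx
    exact this
  have hFJ : F ≤ J := hspan ▸ Submodule.span_le.2 hTJ
  exact hC J hJC ⟨s, hs, F, ⟨T, hspan⟩, hFJ, fun n hn => hmul n (hJI hn)⟩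
end

section
/- A ring R is right S-Noetherian if and only if every completely prime right ideal of R is S-finite. -/
open MulOpposite

/-- A proper right ideal `P` is completely prime if `aP ⊆ P` and `ab ∈ P` imply
`a ∈ P` or `b ∈ P`. -/
def IsCompletelyPrime {R : Type*} [Ring R] (P : Submodule Rᵐᵒᵖ R) : Prop :=
  P ≠ ⊤ ∧ ∀ a b : R, (∀ p ∈ P, a * p ∈ P) → a * b ∈ P → a ∈ P ∨ b ∈ P

/-!
By Zorn's lemma, if some right ideal is not `S`-finite there is a maximal such right ideal `P`:
an `S`-finite union of a chain is witnessed by a finitely generated, hence compact, submodule,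
which already lies in a member of the chain. Such a `P` is completely prime. Indeed, if
`aP ⊆ P` and `ab ∈ P` with `a, b ∉ P`, then `P + aR` and `(P : a) = {r | ar ∈ P}` strictly
contain `P`, so they are `S`-finite, say with `s₁` and `s₂`. Writing `x s₁ = y + a r` for
`x ∈ P`, with `y` in a finitely generated part of `P`, forces `r ∈ (P : a)`, so that
`x s₁ s₂ = y s₂ + a (r s₂)` shows `P` to be `S`-finite with `s₁ s₂`.
-/

theorem Submodule.FG.exists_fg_le_and_le_sup {A M : Type*} [Semiring A] [AddCommGroup M] [Module A M]
    {F N N' : Submodule A M} (hF : F.FG) (hle : F ≤ N ⊔ N') :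
    ∃ G : Submodule A M, G.FG ∧ G ≤ N ∧ F ≤ G ⊔ N' := by
  obtain ⟨T, rfl⟩ := hF
  have hsplit : ∀ t ∈ T, ∃ p ∈ N, t - p ∈ N' := fun t ht => by
    obtain ⟨p, hp, q, hq, rfl⟩ := Submodule.mem_sup.1 (hle (Submodule.subset_span ht))
    exact ⟨p, hp, by simpa using hq⟩
  choose! p hpN hp using hsplit
  refine ⟨Submodule.span A (p '' T), Submodule.fg_span (T.finite_toSet.image p),
    Submodule.span_le.2 ?_, Submodule.span_le.2 fun t ht => ?_⟩
  · rintro _ ⟨t, ht, rfl⟩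
    exact hpN t ht
  · exact Submodule.mem_sup.2
      ⟨p t, Submodule.subset_span ⟨t, ht, rfl⟩, t - p t, hp t ht, add_sub_cancel _ _⟩

section SFinite

variable {R : Type*} [Ring R] {M : Type*} [AddCommGroup M] [Module Rᵐᵒᵖ M] {S : Set R}

def rightSMulMap (m : M) : R →ₗ[Rᵐᵒᵖ] M where
  toFun r := op r • m
  map_add' r r' := by simp only [op_add, add_smul]
  map_smul' c r := by simp only [smul_eq_mul_unop, op_mul, op_unop, mul_smul, RingHom.id_apply]

/-- The colon right ideal `(N : m) = {r | m r ∈ N}`. -/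
def colon (N : Submodule Rᵐᵒᵖ M) (m : M) : Submodule Rᵐᵒᵖ R :=
  N.comap (rightSMulMap m)

theorem sFinite_of_sFinite_sup_span_of_sFinite_colon (hSmul : ∀ a ∈ S, ∀ b ∈ S, a * b ∈ S)
    {N : Submodule Rᵐᵒᵖ M} {m : M} (hsup : SFinite S (N ⊔ Submodule.span Rᵐᵒᵖ {m}))
    (hcolon : SFinite S (colon N m)) : SFinite S N := by
  obtain ⟨s₁, hs₁, F₁, hF₁, hF₁le, hs₁F₁⟩ := hsup
  obtain ⟨G, hG, hGN, hF₁G⟩ := hF₁.exists_fg_le_and_le_sup hF₁le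
  obtain ⟨s₂, hs₂, F₂, hF₂, hF₂le, hs₂F₂⟩ := hcolon
  refine ⟨s₁ * s₂, hSmul _ hs₁ _ hs₂, G ⊔ F₂.map (rightSMulMap m), hG.sup (hF₂.map _),
    sup_le hGN (Submodule.map_le_iff_le_comap.2 hF₂le), fun x hx => ?_⟩
  obtain ⟨y, hy, z, hz, hxy⟩ := Submodule.mem_sup.1 (hF₁G (hs₁F₁ x (Submodule.mem_sup_left hx)))
  obtain ⟨r, rfl⟩ := Submodule.mem_span_singleton.1 hz
  have hr : r.unop ∈ colon N m := by
    change op r.unop • m ∈ N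
    rw [op_unop, eq_sub_of_add_eq' hxy]
    exact N.sub_mem (N.smul_mem _ hx) (hGN hy)
  have hdecomp : op (s₁ * s₂) • x = op s₂ • y + rightSMulMap m (op s₂ • r.unop) := by
    rw [op_mul, mul_smul, ← hxy, smul_add, map_smul]
    simp [rightSMulMap]
  rw [hdecomp]
  exact add_mem (Submodule.mem_sup_left (G.smul_mem _ hy))
    (Submodule.mem_sup_right (Submodule.mem_map_of_mem (hs₂F₂ _ hr)))

theorem SFinite.exists_mem_of_isChain {c : Set (Submodule Rᵐᵒᵖ M)}
    (hchain : IsChain (· ≤ ·) c) (hne : c.Nonempty) (h : SFinite S (sSup c)) :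
    ∃ I ∈ c, SFinite S I := by
  obtain ⟨s, hs, F, hF, hFle, hsF⟩ := h
  obtain ⟨I, hI, hFI⟩ := (CompleteLattice.isCompactElement_iff_le_of_directed_sSup_le _ F).1
    ((Submodule.fg_iff_compact F).1 hF) c hne hchain.directedOn hFle
  exact ⟨I, hI, s, hs, F, hF, hFI, fun n hn => hsF n (le_sSup hI hn)⟩

theorem exists_le_maximal_not_sFinite {N : Submodule Rᵐᵒᵖ M} (hN : ¬ SFinite S N) :
    ∃ P, N ≤ P ∧ Maximal (fun I => ¬ SFinite S I) P :=
  zorn_le_nonempty₀ {I : Submodule Rᵐᵒᵖ M | ¬ SFinite S I}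
    (fun c hc hchain y hy => ⟨sSup c, fun h => by
      obtain ⟨I, hI, hIfin⟩ := h.exists_mem_of_isChain hchain ⟨y, hy⟩
      exact hc hI hIfin, fun _ => le_sSup⟩) N hN

end SFinite

section Ring

variable {R : Type*} [Ring R] {S : Set R}

theorem sFinite_top (hS1 : (1 : R) ∈ S) : SFinite S (⊤ : Submodule Rᵐᵒᵖ R) := by
  refine ⟨1, hS1, ⊤, ⟨{1}, eq_top_iff.2 fun x _ => ?_⟩, le_rfl, fun _ _ => trivial⟩
  rw [Finset.coe_singleton, Submodule.mem_span_singleton]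
  exact ⟨op x, by simp⟩

theorem isCompletelyPrime_of_maximal_not_sFinite (hS1 : (1 : R) ∈ S)
    (hSmul : ∀ a ∈ S, ∀ b ∈ S, a * b ∈ S) {P : Submodule Rᵐᵒᵖ R}
    (hP : Maximal (fun I => ¬ SFinite S I) P) : IsCompletelyPrime P := by
  have hgt : ∀ Q, P < Q → SFinite S Q := fun Q hQ => not_not.1 (hP.not_prop_of_gt hQ)
  refine ⟨fun htop => hP.prop (htop ▸ sFinite_top hS1), fun a b haP hab => ?_⟩
  by_contra! hab'
  have hsup : P < P ⊔ Submodule.span Rᵐᵒᵖ {a} :=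
    left_lt_sup.2 fun h => hab'.1 (h (Submodule.mem_span_singleton_self a))
  have hcolon : P < colon P a :=
    lt_of_le_of_ne (fun p hp => haP p hp) fun h => hab'.2 (h ▸ hab)
  exact hP.prop (sFinite_of_sFinite_sup_span_of_sFinite_colon hSmul (hgt _ hsup) (hgt _ hcolon))

end Ring

theorem S_noetherian_iff_completely_prime_SFinite {R : Type*} [Ring R] (S : Set R)
    (hS1 : (1 : R) ∈ S) (hSmul : ∀ a ∈ S, ∀ b ∈ S, a * b ∈ S) :
    (∀ I : Submodule Rᵐᵒᵖ R, SFinite S I) ↔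
      (∀ P : Submodule Rᵐᵒᵖ R, IsCompletelyPrime P → SFinite S P) := by
  refine ⟨fun h P _ => h P, fun h I => ?_⟩
  by_contra hI
  obtain ⟨P, -, hP⟩ := exists_le_maximal_not_sFinite hI
  exact hP.prop (h P (isCompletelyPrime_of_maximal_not_sFinite hS1 hSmul hP))
end

section
/- Let S be a multiplicative subset of a ring R and M a right R-module. If M is S-Noetherian then every nonempty chain of submodules of M is S-stationary. -/
open MulOpposite

theorem S_noetherian_chain_S_stationary {R : Type*} [Ring R] (S : Set R)
    (hS1 : (1 : R) ∈ S) (hSmul : ∀ a ∈ S, ∀ b ∈ S, a * b ∈ S)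
    {M : Type*} [AddCommGroup M] [Module Rᵐᵒᵖ M]
    (hM : ∀ N : Submodule Rᵐᵒᵖ M, SFinite S N)
    (C : Set (Submodule Rᵐᵒᵖ M)) (hne : C.Nonempty) (hchain : IsChain (· ≤ ·) C) :
    ∃ N₀ ∈ C, ∃ s ∈ S, ∀ N ∈ C, ∀ n ∈ N, (op s) • n ∈ N₀ := by
  obtain ⟨s, hs, F, hFG, hFle, hF⟩ := hM (sSup C)
  have hdir : DirectedOn (· ≤ ·) C := hchain.directedOn
  obtain ⟨N₀, hN₀C, hFN₀⟩ :=
    ((CompleteLattice.isCompactElement_iff_le_of_directed_sSup_le (α := Submodule Rᵐᵒᵖ M) F).mp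
      ((Submodule.fg_iff_compact F).mp hFG)) C hne hdir hFle
  refine ⟨N₀, hN₀C, s, hs, fun N hN n hn => hFN₀ (hF n ?_)⟩
  exact (le_sSup hN : N ≤ sSup C) hn
end

section
/- Let S be a multiplicative subset of a ring R and M a right R-module. If every nonempty chain of submodules of M is S-stationary, then every nonempty S-saturated set of submodules of M has a maximal element. -/
open MulOpposite

/-- A family `F` of submodules of a right module `M` is `S`-saturated if whenever
`Ns ⊆ N₀` for some `s ∈ S` and `N₀ ∈ F`, then `N ∈ F`. -/
def SSaturated {R : Type*} [Ring R] {M : Type*} [AddCommGroup M] [Module Rᵐᵒᵖ M]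
    (S : Set R) (F : Set (Submodule Rᵐᵒᵖ M)) : Prop :=
  ∀ N : Submodule Rᵐᵒᵖ M, (∃ s ∈ S, ∃ N₀ ∈ F, ∀ n ∈ N, (op s) • n ∈ N₀) → N ∈ F

theorem stationary_implies_saturated_has_maximal {R : Type*} [Ring R] (S : Set R)
    (hS1 : (1 : R) ∈ S) (hSmul : ∀ a ∈ S, ∀ b ∈ S, a * b ∈ S)
    {M : Type*} [AddCommGroup M] [Module Rᵐᵒᵖ M]
    (h : ∀ C : Set (Submodule Rᵐᵒᵖ M), C.Nonempty → IsChain (· ≤ ·) C →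
      ∃ N₀ ∈ C, ∃ s ∈ S, ∀ N ∈ C, ∀ n ∈ N, (op s) • n ∈ N₀) :
    ∀ F : Set (Submodule Rᵐᵒᵖ M), F.Nonempty → SSaturated S F →
      ∃ N ∈ F, ∀ L ∈ F, N ≤ L → L = N := by
  intro F ⟨N0, hN0⟩ hsat
  have key : ∀ c ⊆ F, IsChain (· ≤ ·) c → ∀ y ∈ c, ∃ ub ∈ F, ∀ z ∈ c, z ≤ ub := by
    intro c hcF hc y hy
    obtain ⟨P, hPc, s, hsS, hP⟩ := h c ⟨y, hy⟩ hc
    refine ⟨sSup c, hsat _ ⟨s, hsS, P, hcF hPc, fun n hn => ?_⟩, fun z hz => le_sSup hz⟩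
    obtain ⟨Q, hQc, hnQ⟩ := (Submodule.mem_sSup_of_directed ⟨y, hy⟩ hc.directedOn).mp hn
    exact hP Q hQc n hnQ
  obtain ⟨m, _, hm⟩ := zorn_le_nonempty₀ F key N0 hN0
  exact ⟨m, hm.1, fun L hL hml => le_antisymm (hm.2 hL hml) hml⟩
end

section
/- Let S be a multiplicative subset of a ring R and M a right R-module. If every nonempty S-saturated set of submodules of M has a maximal element, then every nonempty set of submodules of M has an S-maximal element. -/
open MulOpposite

theorem saturated_maximal_implies_S_maximal {R : Type*} [Ring R] (S : Set R)
    (hS1 : (1 : R) ∈ S) (hSmul : ∀ a ∈ S, ∀ b ∈ S, a * b ∈ S)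
    {M : Type*} [AddCommGroup M] [Module Rᵐᵒᵖ M]
    (h : ∀ G : Set (Submodule Rᵐᵒᵖ M), G.Nonempty → SSaturated S G →
      ∃ N ∈ G, ∀ L ∈ G, N ≤ L → L = N) :
    ∀ F : Set (Submodule Rᵐᵒᵖ M), F.Nonempty →
      ∃ N ∈ F, ∃ s ∈ S, ∀ L ∈ F, N ≤ L → ∀ x ∈ L, (op s) • x ∈ N := by
  intro F hF
  set G : Set (Submodule Rᵐᵒᵖ M) :=
    {N | ∃ s ∈ S, ∃ N₀ ∈ F, ∀ n ∈ N, (op s) • n ∈ N₀} with hGdef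
  have hFG : ∀ N ∈ F, N ∈ G := fun N hN =>
    ⟨1, hS1, N, hN, fun n hn => by simpa using hn⟩
  obtain ⟨N', hN'⟩ := hF
  have hGsat : SSaturated S G := by
    rintro N ⟨s, hs, N₁, ⟨t, ht, N₂, hN₂F, hN₁t⟩, hNs⟩
    refine ⟨s * t, hSmul s hs t ht, N₂, hN₂F, fun n hn => ?_⟩
    have := hN₁t _ (hNs n hn)
    simpa [op_mul, mul_smul] using this
  obtain ⟨N, hNG, hNmax⟩ := h G ⟨N', hFG _ hN'⟩ hGsat
  obtain ⟨s, hs, N₀, hN₀F, hNs⟩ := hNG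
  -- N₀ ≤ N
  have hN₀N : N₀ ≤ N := by
    have hsup : N ⊔ N₀ ∈ G := by
      refine ⟨s, hs, N₀, hN₀F, fun n hn => ?_⟩
      obtain ⟨y, hy, z, hz, rfl⟩ := Submodule.mem_sup.mp hn
      rw [smul_add]
      exact N₀.add_mem (hNs y hy) (N₀.smul_mem _ hz)
    have := hNmax _ hsup le_sup_left
    rw [← this]
    exact le_sup_right
  refine ⟨N₀, hN₀F, s, hs, fun L hLF hN₀L x hxL => ?_⟩
  have hLN : L ≤ N := by
    have hsup : L ⊔ N ∈ G := by
      refine ⟨s, hs, L, hLF, fun n hn => ?_⟩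
      obtain ⟨y, hy, z, hz, rfl⟩ := Submodule.mem_sup.mp hn
      rw [smul_add]
      exact L.add_mem (L.smul_mem _ hy) (hN₀L (hNs z hz))
    have := hNmax _ hsup le_sup_right
    rw [← this]
    exact le_sup_left
  exact hNs x (hLN hxL)
end

section
/- Let S be a multiplicative subset of a ring R and M a right R-module. If every nonempty set of submodules of M has an S-maximal element, then M is S-Noetherian. -/
open MulOpposite

theorem S_maximal_implies_S_noetherian {R : Type*} [Ring R] (S : Set R)
    (hS1 : (1 : R) ∈ S) (hSmul : ∀ a ∈ S, ∀ b ∈ S, a * b ∈ S)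
    {M : Type*} [AddCommGroup M] [Module Rᵐᵒᵖ M]
    (h : ∀ F : Set (Submodule Rᵐᵒᵖ M), F.Nonempty →
      ∃ N ∈ F, ∃ s ∈ S, ∀ L ∈ F, N ≤ L → ∀ x ∈ L, (op s) • x ∈ N) :
    ∀ N : Submodule Rᵐᵒᵖ M, SFinite S N := by
  intro N
  obtain ⟨F₀, ⟨hF₀fg, hF₀le⟩, s, hsS, hmax⟩ :=
    h {F | F.FG ∧ F ≤ N} ⟨⊥, Submodule.fg_bot, bot_le⟩
  refine ⟨s, hsS, F₀, hF₀fg, hF₀le, fun n hn => ?_⟩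
  have hL : (F₀ ⊔ Submodule.span Rᵐᵒᵖ {n}) ∈ {F : Submodule Rᵐᵒᵖ M | F.FG ∧ F ≤ N} :=
    ⟨hF₀fg.sup (Submodule.fg_span_singleton n),
      sup_le hF₀le ((Submodule.span_singleton_le_iff_mem n N).2 hn)⟩
  exact hmax _ hL le_sup_left n (le_sup_right (a := F₀) (Submodule.mem_span_singleton_self n))
end

section
/- Let S be a multiplicative subset of a ring R and M a right R-module. The following are equivalent: (i) M is S-Noetherian; (ii) every nonempty chain of submodules of M is S-stationary; (iii) every nonempty S-saturated family of submodules of M has a maximal element; (iv) every nonempty family of submodules of M has an S-maximal element. -/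
open MulOpposite

theorem S_noetherian_tfae {R : Type*} [Ring R] (S : Set R)
    (hS1 : (1 : R) ∈ S) (hSmul : ∀ a ∈ S, ∀ b ∈ S, a * b ∈ S)
    {M : Type*} [AddCommGroup M] [Module Rᵐᵒᵖ M] :
    List.TFAE
      [∀ N : Submodule Rᵐᵒᵖ M, SFinite S N,
       ∀ C : Set (Submodule Rᵐᵒᵖ M), C.Nonempty → IsChain (· ≤ ·) C →
         ∃ N₀ ∈ C, ∃ s ∈ S, ∀ N ∈ C, ∀ n ∈ N, (op s) • n ∈ N₀,
       ∀ F : Set (Submodule Rᵐᵒᵖ M), F.Nonempty → SSaturated S F →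
         ∃ N ∈ F, ∀ L ∈ F, N ≤ L → L = N,
       ∀ F : Set (Submodule Rᵐᵒᵖ M), F.Nonempty →
         ∃ N ∈ F, ∃ s ∈ S, ∀ L ∈ F, N ≤ L → ∀ x ∈ L, (op s) • x ∈ N] := by
  tfae_have 1 → 2 := by
    intro h1 C hCne hC
    obtain ⟨s, hs, F₀, hFG, hle, hmem⟩ := h1 (sSup C)
    obtain ⟨N₀, hN₀C, hFN₀⟩ :=
      (CompleteLattice.isCompactElement_iff_le_of_directed_sSup_le _ F₀).mp
        ((Submodule.fg_iff_compact F₀).mp hFG) C hCne hC.directedOn hle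
    exact ⟨N₀, hN₀C, s, hs, fun N hN n hn =>
      hFN₀ (hmem n (le_sSup hN hn))⟩
  tfae_have 2 → 3 := by
    intro h2 F hFne hsat
    obtain ⟨x, hx⟩ := hFne
    have hub : ∀ c ⊆ F, IsChain (· ≤ ·) c → ∀ y ∈ c, ∃ ub ∈ F, ∀ z ∈ c, z ≤ ub := by
      intro c hcF hc y hy
      obtain ⟨N₀, hN₀c, s, hs, hstab⟩ := h2 c ⟨y, hy⟩ hc
      refine ⟨sSup c, hsat _ ⟨s, hs, N₀, hcF hN₀c, fun n hn => ?_⟩,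
        fun z hz => le_sSup hz⟩
      obtain ⟨N, hNc, hnN⟩ := (Submodule.mem_sSup_of_directed ⟨y, hy⟩ hc.directedOn).mp hn
      exact hstab N hNc n hnN
    obtain ⟨m, _, hm⟩ := zorn_le_nonempty₀ F hub x hx
    exact ⟨m, hm.1, fun L hL hmL => le_antisymm (hm.2 hL hmL) hmL⟩
  tfae_have 3 → 4 := by
    intro h3 F hFne
    set G : Set (Submodule Rᵐᵒᵖ M) :=
      {N | ∃ s ∈ S, ∃ N₀ ∈ F, ∀ n ∈ N, (op s) • n ∈ N₀} with hG
    have hGsat : SSaturated S G := by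
      rintro N ⟨t, ht, K, ⟨s', hs', N₀, hN₀, hK⟩, hNt⟩
      refine ⟨t * s', hSmul t ht s' hs', N₀, hN₀, fun n hn => ?_⟩
      have := hK _ (hNt n hn)
      rwa [smul_smul, ← op_mul] at this
    obtain ⟨x, hx⟩ := hFne
    have hGne : G.Nonempty := ⟨x, 1, hS1, x, hx, fun n hn => by simpa using hn⟩
    obtain ⟨N, hNG, hNmax⟩ := h3 G hGne hGsat
    obtain ⟨s, hs, N₀, hN₀F, hNs⟩ := hNG
    refine ⟨N₀, hN₀F, s, hs, fun L hLF hNL x hxL => ?_⟩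
    have hsup : N ⊔ L ∈ G := by
      refine ⟨s, hs, L, hLF, fun n hn => ?_⟩
      obtain ⟨a, ha, b, hb, rfl⟩ := Submodule.mem_sup.mp hn
      rw [smul_add]
      exact L.add_mem (hNL (hNs a ha)) (L.smul_mem _ hb)
    have hLN : L ≤ N := le_trans le_sup_right (le_of_eq (hNmax _ hsup le_sup_left))
    exact hNs x (hLN hxL)
  tfae_have 4 → 1 := by
    intro h4 N
    obtain ⟨F₀, ⟨hFG, hle⟩, s, hs, hmax⟩ :=
      h4 {F | F.FG ∧ F ≤ N} ⟨⊥, Submodule.fg_bot, bot_le⟩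
    refine ⟨s, hs, F₀, hFG, hle, fun n hn => ?_⟩
    exact hmax (F₀ ⊔ Submodule.span _ {n})
      ⟨hFG.sup (Submodule.fg_span_singleton n),
        sup_le hle ((Submodule.span_singleton_le_iff_mem n N).mpr hn)⟩
      le_sup_left n (Submodule.mem_sup_right (Submodule.mem_span_singleton_self n))
  tfae_finish
end

section
/- Let R be a commutative ring and S a multiplicative subset. Then the set consisting of all prime ideals of R together with all proper ideals meeting S is an S-Noetherian point annihilator set for R: every nonzero S-Noetherian R-module M has a nonzero element x whose annihilator is either a prime ideal or a proper ideal meeting S. -/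
/-!
If a nonzero `x : M` is killed by some `s ∈ S`, its annihilator is a proper ideal meeting `S`.
Otherwise `M` is `S`-torsion-free. The localization `S⁻¹M` is then a Noetherian `S⁻¹R`-module,
because every submodule of `S⁻¹M` is the localization of a submodule `N` of `M`, and the finitely
generated `F` with `s • N ≤ F ≤ N` has the same localization. A nonzero Noetherian module has a
prime point annihilator: take an associated prime of the Noetherian ring `A ⧸ Ann x`. Finally,
if `y = m / u` then torsion-freeness gives `Ann_R m = Ann_{S⁻¹R} y ∩ R`, which is prime.
-/

open LinearMap Submodule

theorem LinearMap.ker_toSpanSingleton_eq_top_iff {R M : Type*} [Semiring R] [AddCommMonoid M]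
    [Module R M] {x : M} : ker (toSpanSingleton R M x) = ⊤ ↔ x = 0 := by
  rw [eq_top_iff, ← toSpanSingleton_eq_zero_iff (R := R), ← ker_eq_top, eq_top_iff]

theorem exists_isPrime_ker_toSpanSingleton_of_isNoetherian {A N : Type*} [CommRing A]
    [AddCommGroup N] [Module A N] [IsNoetherian A N] {x : N} (hx : x ≠ 0) :
    ∃ y : N, Ideal.IsPrime (ker (toSpanSingleton A N y)) := by
  set I := ker (toSpanSingleton A N x)
  have : IsNoetherianRing (A ⧸ I) :=
    isNoetherianRing_iff.mpr <| isNoetherian_of_tower A <|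
      isNoetherian_of_injective _ (ker_eq_bot.mp (ker_liftQ_eq_bot' I _ rfl))
  have : Nontrivial (A ⧸ I) :=
    Ideal.Quotient.nontrivial_iff.mpr (ker_toSpanSingleton_eq_top_iff.not.mpr hx)
  obtain ⟨P, hP⟩ := associatedPrimes.nonempty (A ⧸ I) (A ⧸ I)
  obtain ⟨hPprime, y, rfl⟩ := isAssociatedPrime_iff.mp hP
  obtain ⟨b, rfl⟩ := Ideal.Quotient.mk_surjective y
  refine ⟨b • x, ?_⟩
  convert hPprime.comap (Ideal.Quotient.mk I)
  ext a
  rw [Ideal.mem_comap, mem_colon_singleton, mem_bot, smul_eq_mul, ← map_mul,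
    Ideal.Quotient.eq_zero_iff_mem, mem_ker, mem_ker, toSpanSingleton_apply,
    toSpanSingleton_apply, mul_smul]

def IsSNoetherian {R : Type*} [CommRing R] (S : Submonoid R) (M : Type*) [AddCommGroup M]
    [Module R M] : Prop :=
  ∀ N : Submodule R M, ∃ s ∈ S, ∃ F : Submodule R M, F.FG ∧ F ≤ N ∧ ∀ n ∈ N, s • n ∈ F

section Localization

variable {R : Type*} [CommRing R] (S : Submonoid R) {M : Type*} [AddCommGroup M] [Module R M]
  (Rₛ : Type*) [CommRing Rₛ] [Algebra R Rₛ]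
  {Mₛ : Type*} [AddCommGroup Mₛ] [Module R Mₛ] [Module Rₛ Mₛ] [IsScalarTower R Rₛ Mₛ]

theorem IsSNoetherian.isNoetherian_of_isLocalizedModule [IsLocalization S Rₛ]
    (f : M →ₗ[R] Mₛ) [IsLocalizedModule S f] (h : IsSNoetherian S M) : IsNoetherian Rₛ Mₛ := by
  refine ⟨fun N' ↦ ?_⟩
  have gi := localized'gi Rₛ S f
  obtain ⟨s, hs, F, hF, hFN, hsN⟩ := h ((N'.restrictScalars R).comap f)
  have hN' : N' = F.localized' Rₛ S f := by
    refine le_antisymm ?_ ((gi.gc.monotone_l hFN).trans (gi.l_u_eq N').le)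
    conv_lhs => rw [← gi.l_u_eq N']
    exact localized'_le_localized'_of_smul_le Rₛ S f ⟨s, hs⟩ fun _ ⟨n, hn, e⟩ ↦ e ▸ hsN n hn
  exact hN' ▸ localized'_fg Rₛ S f hF

variable {S} (f : M →ₗ[R] Mₛ) [IsLocalizedModule S f]

theorem IsLocalizedModule.mk'_eq_zero_iff_of_torsion'_eq_bot (h : torsion' R M S = ⊥) {m : M}
    (u : S) : IsLocalizedModule.mk' f m u = 0 ↔ m = 0 := by
  rw [IsLocalizedModule.mk'_eq_zero', ← mem_torsion'_iff (R := R), h, mem_bot]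

theorem ker_toSpanSingleton_eq_comap_of_torsion'_eq_bot (h : torsion' R M S = ⊥) (m : M)
    (u : S) : ker (toSpanSingleton R M m) = Ideal.comap (algebraMap R Rₛ)
      (ker (toSpanSingleton Rₛ Mₛ (IsLocalizedModule.mk' f m u))) := by
  ext a
  rw [Ideal.mem_comap, mem_ker, mem_ker, toSpanSingleton_apply, toSpanSingleton_apply,
    algebraMap_smul, ← IsLocalizedModule.mk'_smul,
    IsLocalizedModule.mk'_eq_zero_iff_of_torsion'_eq_bot f h]

end Localization

theorem comm_S_noetherian_point_annihilator {R : Type*} [CommRing R] (S : Set R)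
    (hS1 : (1 : R) ∈ S) (hSmul : ∀ a ∈ S, ∀ b ∈ S, a * b ∈ S)
    {M : Type*} [AddCommGroup M] [Module R M]
    (hM : ∃ x : M, x ≠ 0)
    (hSN : ∀ N : Submodule R M, ∃ s ∈ S, ∃ F : Submodule R M,
      F.FG ∧ F ≤ N ∧ ∀ n ∈ N, s • n ∈ F) :
    ∃ x : M, x ≠ 0 ∧
      (Ideal.IsPrime (LinearMap.ker (LinearMap.toSpanSingleton R M x)) ∨
        (LinearMap.ker (LinearMap.toSpanSingleton R M x) ≠ ⊤ ∧
          ∃ s ∈ S, s ∈ LinearMap.ker (LinearMap.toSpanSingleton R M x))) := by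
  let S' : Submonoid R := ⟨⟨S, fun {a b} ha hb ↦ hSmul a ha b hb⟩, hS1⟩
  by_cases htors : torsion' R M S' = ⊥
  · let f := LocalizedModule.mkLinearMap S' M
    have := IsSNoetherian.isNoetherian_of_isLocalizedModule S' (Localization S') f hSN
    obtain ⟨x, hx⟩ := hM
    obtain ⟨y, hy⟩ := exists_isPrime_ker_toSpanSingleton_of_isNoetherian (A := Localization S')
      ((IsLocalizedModule.mk'_eq_zero_iff_of_torsion'_eq_bot f htors 1).not.mpr hx)
    obtain ⟨⟨m, u⟩, rfl⟩ := IsLocalizedModule.mk'_surjective S' f y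
    have hm : Ideal.IsPrime (ker (toSpanSingleton R M m)) := by
      rw [ker_toSpanSingleton_eq_comap_of_torsion'_eq_bot (Localization S') f htors m u]
      exact hy.comap _
    exact ⟨m, ker_toSpanSingleton_eq_top_iff.not.mp hm.ne_top, Or.inl hm⟩
  · obtain ⟨x, ⟨s, hs⟩, hx⟩ := (Submodule.ne_bot_iff _).mp htors
    exact ⟨x, hx, Or.inr ⟨ker_toSpanSingleton_eq_top_iff.not.mpr hx, s, s.2, hs⟩⟩
end

section
/- Let S be a multiplicative subset of a ring R and T a right S-Noetherian point annihilator set for R. If every right ideal in T is S-finite, then R is right S-Noetherian. -/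
/-!
Cohen's argument. If some right ideal is not `S`-finite, Zorn's lemma gives a right ideal `P`
maximal among those that are not (an `S`-finite supremum of a chain is witnessed by a finitely
generated submodule, which lies in one member of the chain). Every right ideal strictly above `P`
is `S`-finite, so `R ⧸ P` is a nonzero `S`-Noetherian module, and it has a point `y + P ≠ 0`
whose annihilator `(P : y) = {r | y * r ∈ P}` lies in `T`, hence is `S`-finite. Since `y ∉ P`,
also `P + yR` is `S`-finite, and these two facts together force `P` to be `S`-finite.
-/

open MulOpposite

universe u

/-- The annihilator of an element `m` of a right `R`-module, as a right ideal of `R`. -/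
def annRight {R : Type*} [Ring R] {M : Type*} [AddCommGroup M] [Module Rᵐᵒᵖ M]
    (m : M) : Submodule Rᵐᵒᵖ R where
  carrier := {r | (op r) • m = 0}
  add_mem' {x y} hx hy := by
    simp only [Set.mem_setOf_eq] at *
    rw [op_add, add_smul, hx, hy, add_zero]
  zero_mem' := by simp
  smul_mem' c x hx := by
    simp only [Set.mem_setOf_eq] at *
    have h : op (c • x) = c * op x := by simp [MulOpposite.smul_eq_mul_unop]
    rw [h, mul_smul, hx, smul_zero]

open Submodule

section Module

variable {R : Type*} [Ring R] {M : Type*} [AddCommGroup M] [Module Rᵐᵒᵖ M] {S : Set R}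

lemma sFinite_of_fg (hS1 : (1 : R) ∈ S) {N : Submodule Rᵐᵒᵖ M} (hN : N.FG) : SFinite S N :=
  ⟨1, hS1, N, hN, le_rfl, fun n hn => by simpa using hn⟩

lemma SFinite.map {M' : Type*} [AddCommGroup M'] [Module Rᵐᵒᵖ M'] (f : M →ₗ[Rᵐᵒᵖ] M')
    {N : Submodule Rᵐᵒᵖ M} (hN : SFinite S N) : SFinite S (N.map f) := by
  obtain ⟨s, hs, F, hF, hFN, hsN⟩ := hN
  refine ⟨s, hs, F.map f, hF.map f, map_mono hFN, ?_⟩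
  rintro _ ⟨n, hn, rfl⟩
  exact ⟨_, hsN n hn, f.map_smul _ _⟩

lemma exists_sFinite_of_sFinite_sSup {c : Set (Submodule Rᵐᵒᵖ M)} (hc : IsChain (· ≤ ·) c)
    (hne : c.Nonempty) (h : SFinite S (sSup c)) : ∃ J ∈ c, SFinite S J := by
  obtain ⟨s, hs, F, hF, hFc, hsF⟩ := h
  obtain ⟨J, hJ, hFJ⟩ := (CompleteLattice.isCompactElement_iff_le_of_directed_sSup_le _ F).mp
    ((fg_iff_compact F).mp hF) c hne hc.directedOn hFc
  exact ⟨J, hJ, s, hs, F, hF, hFJ, fun n hn => hsF n (le_sSup hJ hn)⟩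

lemma exists_maximal_not_sFinite {N₀ : Submodule Rᵐᵒᵖ M} (hN₀ : ¬SFinite S N₀) :
    ∃ P : Submodule Rᵐᵒᵖ M, Maximal (fun N => ¬SFinite S N) P := by
  have hchain : ∀ c ⊆ {N : Submodule Rᵐᵒᵖ M | ¬SFinite S N}, IsChain (· ≤ ·) c →
      ∀ y ∈ c, ∃ ub ∈ {N | ¬SFinite S N}, ∀ z ∈ c, z ≤ ub := fun c hcs hc y hy =>
    ⟨sSup c, fun h => (exists_sFinite_of_sFinite_sSup hc ⟨y, hy⟩ h).elim fun J hJ => hcs hJ.1 hJ.2,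
      fun _ => le_sSup⟩
  obtain ⟨P, -, hP⟩ := zorn_le_nonempty₀ _ hchain N₀ hN₀
  exact ⟨P, hP⟩

lemma sFinite_quotient_of_forall_lt (hS1 : (1 : R) ∈ S) {P : Submodule Rᵐᵒᵖ M}
    (hP : ∀ Q, P < Q → SFinite S Q) (N : Submodule Rᵐᵒᵖ (M ⧸ P)) : SFinite S N := by
  rcases eq_or_ne N ⊥ with rfl | hN
  · exact sFinite_of_fg hS1 fg_bot
  have hlt : P < N.comap P.mkQ := by
    refine lt_of_le_of_ne (fun x hx => ?_) fun hPN => hN ?_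
    · simp [(Quotient.mk_eq_zero P).mpr hx]
    · rw [← map_comap_eq_of_surjective P.mkQ_surjective N, ← hPN, mkQ_map_self]
  simpa [map_comap_eq_of_surjective P.mkQ_surjective] using (hP _ hlt).map P.mkQ

end Module

lemma Submodule.exists_fg_le_of_fg_le_sup {R M : Type*} [Semiring R] [AddCommMonoid M]
    [Module R M] {A B F : Submodule R M} (hF : F.FG) (hFAB : F ≤ A ⊔ B) :
    ∃ A₀ ≤ A, A₀.FG ∧ F ≤ A₀ ⊔ B := by
  obtain ⟨s, hs, rfl⟩ := fg_def.mp hF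
  have hdecomp : ∀ x ∈ s, ∃ a ∈ A, ∃ b ∈ B, a + b = x := fun x hx =>
    mem_sup.mp (hFAB (subset_span hx))
  choose! a ha b hb hab using hdecomp
  refine ⟨span R (a '' s), span_le.mpr ?_, fg_def.mpr ⟨_, hs.image a, rfl⟩, span_le.mpr ?_⟩
  · rintro _ ⟨x, hx, rfl⟩
    exact ha x hx
  · intro x hx
    rw [← hab x hx]
    exact add_mem_sup (subset_span ⟨x, hx, rfl⟩) (hb x hx)

section RightIdeal

variable {R : Type*} [Ring R] {S : Set R}

lemma fg_top_rightIdeal : (⊤ : Submodule Rᵐᵒᵖ R).FG :=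
  ⟨{1}, by simp [span_singleton_eq_top_iff]⟩

lemma annRight_mkQ (P : Submodule Rᵐᵒᵖ R) (y : R) :
    annRight (P.mkQ y) = P.comap (LinearMap.mulLeft Rᵐᵒᵖ y) := by
  ext r
  change op r • P.mkQ y = 0 ↔ y * r ∈ P
  rw [← map_smul, mkQ_apply, Quotient.mk_eq_zero, op_smul_eq_mul]

lemma sFinite_of_sFinite_sup_of_sFinite_comap_mulLeft (hSmul : ∀ a ∈ S, ∀ b ∈ S, a * b ∈ S)
    {P : Submodule Rᵐᵒᵖ R} {y : R} (hsup : SFinite S (P ⊔ span Rᵐᵒᵖ {y}))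
    (hcolon : SFinite S (P.comap (LinearMap.mulLeft Rᵐᵒᵖ y))) : SFinite S P := by
  obtain ⟨t, ht, F, hF, hFle, htF⟩ := hsup
  obtain ⟨P₀, hP₀P, hP₀, hFP₀⟩ := exists_fg_le_of_fg_le_sup hF hFle
  obtain ⟨s, hs, G, hG, hGle, hsG⟩ := hcolon
  refine ⟨t * s, hSmul t ht s hs, P₀ ⊔ G.map (LinearMap.mulLeft Rᵐᵒᵖ y), hP₀.sup (hG.map _),
    sup_le hP₀P (map_le_iff_le_comap.mpr hGle), fun z hz => ?_⟩
  -- `z t = p + y r` with `p ∈ P₀ ⊆ P` puts `r` in `(P : y)`, so `z t s = p s + y (r s) ∈ P₀ + y G`.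
  obtain ⟨p, hp, _, hr, hzt⟩ := mem_sup.mp (hFP₀ (htF z (mem_sup_left hz)))
  obtain ⟨r, rfl⟩ := mem_span_singleton.mp hr
  have hr_colon : unop r ∈ P.comap (LinearMap.mulLeft Rᵐᵒᵖ y) := by
    have hyr : y * unop r = op t • z - p := by
      rw [← hzt, add_sub_cancel_left, smul_eq_mul_unop]
    rw [mem_comap, LinearMap.mulLeft_apply, hyr]
    exact sub_mem (P.smul_mem _ hz) (hP₀P hp)
  rw [op_mul, mul_smul, ← hzt, smul_add]
  refine add_mem_sup (P₀.smul_mem _ hp) ⟨op s • unop r, hsG _ hr_colon, ?_⟩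
  simp only [LinearMap.mulLeft_apply, smul_eq_mul_unop, unop_op, mul_assoc]

end RightIdeal

theorem point_annihilator_set_S_cohen {R : Type u} [Ring R] (S : Set R)
    (hS1 : (1 : R) ∈ S) (hSmul : ∀ a ∈ S, ∀ b ∈ S, a * b ∈ S)
    (T : Set (Submodule Rᵐᵒᵖ R))
    (hT : ∀ (M : Type u) [AddCommGroup M] [Module Rᵐᵒᵖ M],
      (∃ m : M, m ≠ 0) → (∀ N : Submodule Rᵐᵒᵖ M, SFinite S N) →
      ∃ m : M, m ≠ 0 ∧ annRight m ∈ T)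
    (h : ∀ I ∈ T, SFinite S I) :
    ∀ I : Submodule Rᵐᵒᵖ R, SFinite S I := by
  by_contra! ⟨I₀, hI₀⟩
  obtain ⟨P, hP⟩ := exists_maximal_not_sFinite hI₀
  have hlt : ∀ Q, P < Q → SFinite S Q := fun Q hPQ => not_not.mp (hP.not_prop_of_gt hPQ)
  have hPtop : P ≠ ⊤ := fun hPtop => hP.prop (hPtop ▸ sFinite_of_fg hS1 fg_top_rightIdeal)
  have : Nontrivial (R ⧸ P) := Quotient.nontrivial_iff.mpr hPtop
  obtain ⟨m, hm, hmT⟩ := hT (R ⧸ P) (exists_ne 0) (sFinite_quotient_of_forall_lt hS1 hlt)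
  obtain ⟨y, rfl⟩ := P.mkQ_surjective m
  have hyP : y ∉ P := fun hyP => hm ((Quotient.mk_eq_zero P).mpr hyP)
  have hPy : P < P ⊔ span Rᵐᵒᵖ {y} :=
    left_lt_sup.mpr fun hle => hyP (hle (mem_span_singleton_self y))
  exact hP.prop (sFinite_of_sFinite_sup_of_sFinite_comap_mulLeft hSmul (hlt _ hPy)
    (annRight_mkQ P y ▸ h _ hmT))
end

section
/- Let R be a ring and M a right R-module. The family F = { I a right ideal of R : for all m ∈ M, mI = 0 implies m = 0 } is a right Oka family. -/
open MulOpposite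

theorem faithful_family_isRightOka {R : Type*} [Ring R]
    {M : Type*} [AddCommGroup M] [Module Rᵐᵒᵖ M] :
    IsRightOka {I : Submodule Rᵐᵒᵖ R |
      ∀ m : M, (∀ r ∈ I, (op r) • m = 0) → m = 0} := by
  constructor
  · intro m h
    simpa using h 1 trivial
  · intro I a hsup hdiv m hm
    have ham : (op a) • m = 0 := by
      apply hdiv
      intro r hr
      have : (op (a * r)) • m = 0 := hm _ hr
      rwa [op_mul, mul_smul] at this
    apply hsup
    intro r hr
    obtain ⟨i, hi, s, hs, rfl⟩ := Submodule.mem_sup.mp hr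
    obtain ⟨c, rfl⟩ := Submodule.mem_span_singleton.mp hs
    have : c • a = a * c.unop := by simp [MulOpposite.smul_eq_mul_unop]
    rw [op_add, add_smul, hm i hi, this, op_mul, mul_smul, ham, smul_zero, add_zero]
end

section
/- Let S be a multiplicative subset of a ring R and M a nonzero S-Noetherian right R-module such that every element of S is a non-zero-divisor for M. Then M has a point annihilator that is a completely prime right ideal; that is, there exists a nonzero m ∈ M such that Ann(m) is a completely prime right ideal of R. -/
open MulOpposite

lemma mem_annRight {R : Type*} [Ring R] {M : Type*} [AddCommGroup M] [Module Rᵐᵒᵖ M]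
    {m : M} {r : R} : r ∈ annRight m ↔ (op r) • m = 0 := Iff.rfl

/-- The `Rᵐᵒᵖ`-linear map `R → M`, `r ↦ (op r) • m₀` (i.e. `r ↦ m₀ · r`). -/
def toCyc {R : Type*} [Ring R] {M : Type*} [AddCommGroup M] [Module Rᵐᵒᵖ M]
    (m₀ : M) : R →ₗ[Rᵐᵒᵖ] M where
  toFun r := (op r) • m₀
  map_add' x y := by
    show op (x + y) • m₀ = op x • m₀ + op y • m₀
    rw [op_add, add_smul]
  map_smul' c x := by
    show op (c • x) • m₀ = c • op x • m₀
    have h : op (c • x) = c * op x := by simp [MulOpposite.smul_eq_mul_unop]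
    rw [h, mul_smul]

theorem S_noetherian_completely_prime_point_annihilator {R : Type*} [Ring R] (S : Set R)
    (hS1 : (1 : R) ∈ S) (hSmul : ∀ a ∈ S, ∀ b ∈ S, a * b ∈ S)
    {M : Type*} [AddCommGroup M] [Module Rᵐᵒᵖ M]
    (hM : ∃ m : M, m ≠ 0)
    (hSN : ∀ N : Submodule Rᵐᵒᵖ M, SFinite S N)
    (hreg : ∀ s ∈ S, ∀ m : M, (op s) • m = 0 → m = 0) :
    ∃ m : M, m ≠ 0 ∧ IsCompletelyPrime (annRight (R := R) m) := by
  by_contra hcon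
  push_neg at hcon
  -- Step: for every nonzero m, there is a nonzero m' with strictly larger annihilator.
  have step : ∀ m : M, m ≠ 0 → ∃ m' : M, m' ≠ 0 ∧
      annRight (R := R) m < annRight (R := R) m' := by
    intro m hm
    have h := hcon m hm
    rw [IsCompletelyPrime] at h
    push_neg at h
    have hne : annRight (R := R) m ≠ ⊤ := by
      intro ht
      have h1 : (1 : R) ∈ annRight (R := R) m := ht ▸ Submodule.mem_top
      rw [mem_annRight] at h1
      simp only [op_one, one_smul] at h1
      exact hm h1
    obtain ⟨a, b, ha, hab, hna, hnb⟩ := h hne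
    refine ⟨(op a) • m, fun h0 => hna (mem_annRight.mpr h0), ?_⟩
    rw [SetLike.lt_iff_le_and_exists]
    refine ⟨fun p hp => ?_, b, ?_, hnb⟩
    · rw [mem_annRight] at *
      rw [smul_smul, ← op_mul]
      exact ha p hp
    · rw [mem_annRight, smul_smul, ← op_mul]
      exact hab
  obtain ⟨m₀, hm₀⟩ := hM
  -- Build a strictly increasing chain of point annihilators.
  let f : {x : M // x ≠ 0} → {x : M // x ≠ 0} := fun x =>
    ⟨(step x.1 x.2).choose, (step x.1 x.2).choose_spec.1⟩
  let seq : ℕ → {x : M // x ≠ 0} := fun n => f^[n] ⟨m₀, hm₀⟩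
  have hseq : ∀ n, annRight (R := R) (seq n).1 < annRight (R := R) (seq (n+1)).1 := by
    intro n
    have he : seq (n+1) = f (seq n) := Function.iterate_succ_apply' f n _
    rw [he]
    exact (step (seq n).1 (seq n).2).choose_spec.2
  have hmono : Monotone (fun n => annRight (R := R) (seq n).1) :=
    monotone_nat_of_le_succ fun n => (hseq n).le
  -- The chain of kernels inside the cyclic module generated by m₀ = seq 0.
  let K : ℕ → Submodule Rᵐᵒᵖ M := fun n =>
    (annRight (R := R) (seq n).1).map (toCyc (seq 0).1)
  have hKmono : Monotone K := fun i j hij => Submodule.map_mono (hmono hij)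
  obtain ⟨s, hsS, F, hFG, hFN, hF⟩ := hSN (⨆ n, K n)
  -- F is finitely generated, hence contained in some K k.
  have hcompact := (Submodule.fg_iff_compact F).mp hFG
  have hdir : DirectedOn (· ≤ ·) (Set.range K) := by
    rintro - ⟨i, rfl⟩ - ⟨j, rfl⟩
    exact ⟨K (max i j), ⟨max i j, rfl⟩, hKmono (le_max_left i j), hKmono (le_max_right i j)⟩
  obtain ⟨-, ⟨k, rfl⟩, hFk⟩ :=
    (CompleteLattice.isCompactElement_iff_le_of_directed_sSup_le _ F).mp hcompact
      (Set.range K) ⟨K 0, 0, rfl⟩ hdir (hFN.trans (le_of_eq (iSup.eq_1 K).symm))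
  -- Pick r in ann(seq (k+1)) but not in ann(seq k).
  obtain ⟨r, hr1, hr0⟩ := SetLike.exists_of_lt (hseq k)
  -- Consider x = m₀ · r ∈ K (k+1) ⊆ ⨆ K.
  have hxK : (op r) • (seq 0).1 ∈ K (k+1) := ⟨r, hr1, rfl⟩
  have hxN : (op r) • (seq 0).1 ∈ ⨆ n, K n := (le_iSup K (k+1)) hxK
  have hxs : (op s) • ((op r) • (seq 0).1) ∈ F := hF _ hxN
  have hxk : (op s) • ((op r) • (seq 0).1) ∈ K k := hFk hxs
  obtain ⟨r', hr', heq⟩ := hxk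
  -- heq : (op r') • (seq 0).1 = (op s) • (op r) • (seq 0).1
  have heq2 : (op (r * s)) • (seq 0).1 = (op r') • (seq 0).1 := by
    rw [op_mul, mul_smul]
    exact heq.symm
  have hsub : (r * s - r') ∈ annRight (R := R) (seq 0).1 := by
    rw [mem_annRight, op_sub, sub_smul, heq2, sub_self]
  have hsub' : (r * s - r') ∈ annRight (R := R) (seq k).1 := hmono (Nat.zero_le k) hsub
  have hrs : (r * s) ∈ annRight (R := R) (seq k).1 := by
    have := Submodule.add_mem _ hsub' hr'
    rwa [sub_add_cancel] at this
  rw [mem_annRight, op_mul, mul_smul] at hrs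
  exact hr0 (mem_annRight.mpr (hreg s hsS (op r • (seq k).1) hrs))
end

section
/- Let S be a multiplicative subset of a ring R and let 0 → M' → M → M'' → 0 be a short exact sequence of right R-modules. Then M is S-Noetherian if and only if both M' and M'' are S-Noetherian. -/
open MulOpposite

theorem S_noetherian_short_exact {R : Type*} [Ring R] (S : Set R)
    (hS1 : (1 : R) ∈ S) (hSmul : ∀ a ∈ S, ∀ b ∈ S, a * b ∈ S)
    {M' M M'' : Type*} [AddCommGroup M'] [Module Rᵐᵒᵖ M']
    [AddCommGroup M] [Module Rᵐᵒᵖ M] [AddCommGroup M''] [Module Rᵐᵒᵖ M'']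
    (f : M' →ₗ[Rᵐᵒᵖ] M) (g : M →ₗ[Rᵐᵒᵖ] M'')
    (hf : Function.Injective f) (hg : Function.Surjective g)
    (hfg : LinearMap.range f = LinearMap.ker g) :
    (∀ N : Submodule Rᵐᵒᵖ M, SFinite S N) ↔
      ((∀ N : Submodule Rᵐᵒᵖ M', SFinite S N) ∧
        (∀ N : Submodule Rᵐᵒᵖ M'', SFinite S N)) := by
  constructor
  · intro h
    constructor
    · intro N
      obtain ⟨s, hs, F, hFfg, hFle, hF⟩ := h (N.map f)
      refine ⟨s, hs, F.comap f, ?_, ?_, ?_⟩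
      · apply Submodule.fg_of_fg_map_injective f hf
        have hmc : (F.comap f).map f = F := by
          rw [Submodule.map_comap_eq, inf_eq_right.mpr]
          exact hFle.trans LinearMap.map_le_range
        rwa [hmc]
      · refine (Submodule.comap_mono hFle).trans ?_
        rw [Submodule.comap_map_eq_of_injective hf]
      · intro n hn
        have h1 : op s • f n ∈ F := hF _ (Submodule.mem_map_of_mem hn)
        rw [Submodule.mem_comap, map_smul]
        exact h1
    · intro N
      obtain ⟨s, hs, F, hFfg, hFle, hF⟩ := h (N.comap g)
      refine ⟨s, hs, F.map g, hFfg.map g, ?_, ?_⟩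
      · refine (Submodule.map_mono hFle).trans ?_
        rw [Submodule.map_comap_eq_of_surjective hg]
      · intro n hn
        obtain ⟨xx, hxx⟩ := hg n
        have hxN : xx ∈ N.comap g := by simp [Submodule.mem_comap, hxx, hn]
        refine ⟨op s • xx, hF xx hxN, ?_⟩
        rw [map_smul, hxx]
  · rintro ⟨h', h''⟩ N
    obtain ⟨s', hs', F', hF'fg, hF'le, hF'⟩ := h' (N.comap f)
    obtain ⟨s'', hs'', F'', hF''fg, hF''le, hF''⟩ := h'' (N.map g)
    obtain ⟨T, hT⟩ := hF''fg
    have hpre : ∀ t : T, ∃ x, x ∈ N ∧ g x = (t : M'') := by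
      rintro ⟨t, ht⟩
      have : (t : M'') ∈ N.map g := hF''le (hT ▸ Submodule.subset_span ht)
      obtain ⟨x, hx, hgx⟩ := this
      exact ⟨x, hx, hgx⟩
    choose x hxN hgx using hpre
    set G : Submodule Rᵐᵒᵖ M := Submodule.span Rᵐᵒᵖ (Set.range x) with hG
    have hGN : G ≤ N := by
      rw [hG, Submodule.span_le]
      rintro _ ⟨t, rfl⟩
      exact hxN t
    refine ⟨s'' * s', hSmul _ hs'' _ hs', F'.map f ⊔ G, ?_, ?_, ?_⟩
    · exact Submodule.FG.sup (hF'fg.map f) (Submodule.fg_span (Set.finite_range x))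
    · exact sup_le ((Submodule.map_mono hF'le).trans (Submodule.map_comap_le f N)) hGN
    · intro n hn
      have hm : op s'' • n ∈ N := N.smul_mem _ hn
      have hgm : g (op s'' • n) ∈ G.map g := by
        have h1 : g (op s'' • n) ∈ F'' := by
          rw [map_smul]
          exact hF'' _ (Submodule.mem_map_of_mem hn)
        have h2 : F'' ≤ G.map g := by
          rw [← hT, Submodule.span_le]
          intro t ht
          exact ⟨x ⟨t, ht⟩, Submodule.subset_span ⟨⟨t, ht⟩, rfl⟩, hgx ⟨t, ht⟩⟩
        exact h2 h1
      obtain ⟨y, hyG, hgy⟩ := hgm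
      have hker : op s'' • n - y ∈ LinearMap.ker g := by
        rw [LinearMap.mem_ker, map_sub, hgy, sub_self]
      obtain ⟨z, hz⟩ := hfg ▸ hker
      have hzN : z ∈ N.comap f := by
        rw [Submodule.mem_comap, hz]
        exact N.sub_mem hm (hGN hyG)
      have hzF : op s' • z ∈ F' := hF' z hzN
      have key : op (s'' * s') • n = f (op s' • z) + op s' • y := by
        rw [map_smul, hz, smul_sub, sub_add_cancel, op_mul, mul_smul]
      rw [key]
      exact Submodule.add_mem _
        (Submodule.mem_sup_left (Submodule.mem_map_of_mem hzF))
        (Submodule.mem_sup_right (G.smul_mem _ hyG))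
end

section
/- Let S be a multiplicative subset of a ring R. If R is right S-Noetherian, then every finitely generated right R-module is S-Noetherian. -/
open MulOpposite

section Aux

variable {A : Type*} [Ring A] (S : Set A)

/-- Auxiliary: `M` is `S`-Noetherian. -/
def SNoeth (M : Type*) [AddCommGroup M] [Module A M] : Prop :=
  ∀ N : Submodule A M, ∃ s ∈ S, ∃ F : Submodule A M, F.FG ∧ F ≤ N ∧ ∀ n ∈ N, s • n ∈ F

lemma SNoeth.of_surjective {M M' : Type*} [AddCommGroup M] [Module A M]
    [AddCommGroup M'] [Module A M'] (f : M →ₗ[A] M') (hf : Function.Surjective f)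
    (h : SNoeth S M) : SNoeth S M' := by
  intro N
  obtain ⟨s, hs, F, hFG, hFle, hF⟩ := h (N.comap f)
  refine ⟨s, hs, F.map f, hFG.map f, ?_, ?_⟩
  · rw [Submodule.map_le_iff_le_comap]; exact hFle
  · intro n hn
    obtain ⟨m, rfl⟩ := hf n
    rw [← map_smul]
    exact Submodule.mem_map_of_mem (hF m hn)

lemma SNoeth.ext (hSmul : ∀ a ∈ S, ∀ b ∈ S, a * b ∈ S)
    {M M' M'' : Type*} [AddCommGroup M] [Module A M]
    [AddCommGroup M'] [Module A M'] [AddCommGroup M''] [Module A M'']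
    (f : M →ₗ[A] M') (g : M'' →ₗ[A] M) (hf : Function.Surjective f)
    (hker : LinearMap.ker f = LinearMap.range g)
    (h'' : SNoeth S M'') (h' : SNoeth S M') : SNoeth S M := by
  intro N
  obtain ⟨s₁, hs₁, F', hF'FG, hF'le, hF'⟩ := h' (N.map f)
  obtain ⟨s₂, hs₂, F'', hF''FG, hF''le, hF''⟩ := h'' (N.comap g)
  classical
  obtain ⟨T, hT⟩ := hF'FG
  let c : M' → M := fun y => if h : ∃ x ∈ N, f x = y then h.choose else 0
  have hc : ∀ y ∈ (T : Set M'), c y ∈ N ∧ f (c y) = y := by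
    intro y hy
    have hyN : y ∈ N.map f := hF'le (by rw [← hT]; exact Submodule.subset_span hy)
    obtain ⟨x, hx, hfx⟩ := hyN
    have hex : ∃ x ∈ N, f x = y := ⟨x, hx, hfx⟩
    simp only [c, dif_pos hex]
    exact ⟨hex.choose_spec.1, hex.choose_spec.2⟩
  set F₁ : Submodule A M := Submodule.span A (c '' T) with hF₁def
  have hF₁le : F₁ ≤ N := by
    rw [Submodule.span_le]
    rintro _ ⟨y, hy, rfl⟩
    exact (hc y hy).1
  have hmapF₁ : F₁.map f = F' := by
    rw [hF₁def, Submodule.map_span, ← Set.image_comp]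
    rw [← hT]
    congr 1
    rw [show (⇑f ∘ c) '' ↑T = (fun y => f (c y)) '' ↑T from rfl]
    rw [Set.image_congr (fun y hy => (hc y hy).2)]
    exact Set.image_id' _
  have hF₁FG : F₁.FG := ⟨T.image c, by rw [Finset.coe_image]⟩
  refine ⟨s₂ * s₁, hSmul s₂ hs₂ s₁ hs₁, F₁ ⊔ F''.map g,
    hF₁FG.sup (hF''FG.map g),
    sup_le hF₁le ((Submodule.map_le_iff_le_comap).2 hF''le), ?_⟩
  intro n hn
  have h1 : s₁ • f n ∈ F' := hF' (f n) (Submodule.mem_map_of_mem hn)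
  rw [← hmapF₁] at h1
  obtain ⟨z, hz, hfz⟩ := h1
  have hkermem : s₁ • n - z ∈ LinearMap.ker f := by
    rw [LinearMap.mem_ker, map_sub, map_smul, hfz, sub_self]
  rw [hker] at hkermem
  obtain ⟨w, hw⟩ := hkermem
  have hwN : w ∈ N.comap g := by
    rw [Submodule.mem_comap, hw]
    exact sub_mem (Submodule.smul_mem N s₁ hn) (hF₁le hz)
  have h2 : s₂ • w ∈ F'' := hF'' w hwN
  have h3 : s₂ • (s₁ • n - z) ∈ F''.map g := by
    rw [← hw, ← map_smul]
    exact Submodule.mem_map_of_mem h2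
  have : (s₂ * s₁) • n = s₂ • z + s₂ • (s₁ • n - z) := by
    rw [mul_smul, smul_sub]; abel
  rw [this]
  exact Submodule.add_mem _ (Submodule.mem_sup_left (Submodule.smul_mem F₁ s₂ hz))
    (Submodule.mem_sup_right h3)

lemma SNoeth.pi (hS1 : (1 : A) ∈ S) (hSmul : ∀ a ∈ S, ∀ b ∈ S, a * b ∈ S)
    (hA : SNoeth S A) : ∀ n : ℕ, SNoeth S (Fin n → A) := by
  intro n
  induction n with
  | zero =>
    intro N
    refine ⟨1, hS1, ⊥, Submodule.fg_bot, bot_le, ?_⟩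
    intro m hm
    have : m = 0 := Subsingleton.elim m 0
    simp [this]
  | succ n ih =>
    refine SNoeth.ext S hSmul (LinearMap.funLeft A A Fin.succ)
      (LinearMap.single A (fun _ : Fin (n+1) => A) 0)
      (LinearMap.funLeft_surjective_of_injective A A Fin.succ (Fin.succ_injective n)) ?_ hA ih
    ext v
    constructor
    · intro hv
      rw [LinearMap.mem_ker] at hv
      refine ⟨v 0, ?_⟩
      funext i
      refine Fin.cases ?_ ?_ i
      · simp
      · intro j
        have : v (Fin.succ j) = 0 := congrFun hv j
        simp [Pi.single_eq_of_ne (Fin.succ_ne_zero j), this]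
    · rintro ⟨a, rfl⟩
      rw [LinearMap.mem_ker]
      funext j
      simp [LinearMap.funLeft, Pi.single_eq_of_ne (Fin.succ_ne_zero j)]

end Aux

theorem fg_module_over_S_noetherian {R : Type*} [Ring R] (S : Set R)
    (hS1 : (1 : R) ∈ S) (hSmul : ∀ a ∈ S, ∀ b ∈ S, a * b ∈ S)
    (hR : ∀ I : Submodule Rᵐᵒᵖ R, SFinite S I)
    {M : Type*} [AddCommGroup M] [Module Rᵐᵒᵖ M]
    (hfg : (⊤ : Submodule Rᵐᵒᵖ M).FG) :
    ∀ N : Submodule Rᵐᵒᵖ M, SFinite S N := by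
  set S' : Set Rᵐᵒᵖ := op '' S with hS'
  have hS'1 : (1 : Rᵐᵒᵖ) ∈ S' := ⟨1, hS1, rfl⟩
  have hS'mul : ∀ a ∈ S', ∀ b ∈ S', a * b ∈ S' := by
    rintro _ ⟨x, hx, rfl⟩ _ ⟨y, hy, rfl⟩
    exact ⟨y * x, hSmul y hy x hx, rfl⟩
  have hAR : SNoeth S' R := by
    intro I
    obtain ⟨s, hs, F, hFG, hFle, hF⟩ := hR I
    exact ⟨op s, ⟨s, hs, rfl⟩, F, hFG, hFle, hF⟩
  let opMap : R →ₗ[Rᵐᵒᵖ] Rᵐᵒᵖ :=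
    { toFun := op
      map_add' := fun x y => rfl
      map_smul' := fun a r => by
        simp [MulOpposite.smul_eq_mul_unop] }
  have hA : SNoeth S' (Rᵐᵒᵖ) :=
    SNoeth.of_surjective S' opMap (fun b => ⟨unop b, rfl⟩) hAR
  have : Module.Finite Rᵐᵒᵖ M := Module.finite_def.mpr hfg
  obtain ⟨n, f, hf⟩ := Module.Finite.exists_fin' Rᵐᵒᵖ M
  have hM : SNoeth S' M :=
    SNoeth.of_surjective S' f hf (SNoeth.pi S' hS'1 hS'mul hA n)
  intro N
  obtain ⟨s', hs', F, hFG, hFle, hF⟩ := hM N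
  obtain ⟨s, hs, rfl⟩ := hs'
  exact ⟨s, hs, F, hFG, hFle, hF⟩
end

section
/- Let R be a ring with multiplicative subset S, and let I be a right ideal that is maximal among right ideals of R that are not S-finite. Then the right R-module R/I is S-Noetherian. -/
open MulOpposite

theorem quotient_by_maximal_non_SFinite_is_S_noetherian {R : Type*} [Ring R] (S : Set R)
    (hS1 : (1 : R) ∈ S) (hSmul : ∀ a ∈ S, ∀ b ∈ S, a * b ∈ S)
    (I : Submodule Rᵐᵒᵖ R) (h1 : ¬ SFinite S I)
    (h2 : ∀ J : Submodule Rᵐᵒᵖ R, I < J → SFinite S J) :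
    ∀ N : Submodule Rᵐᵒᵖ (R ⧸ I), SFinite S N := by
  intro N
  set J := N.comap I.mkQ with hJdef
  have hIJ : I ≤ J := fun x hx => by
    simp only [hJdef, Submodule.mem_comap, Submodule.mkQ_apply,
      (Submodule.Quotient.mk_eq_zero I).2 hx]
    exact N.zero_mem
  by_cases hJ : J = I
  · refine ⟨1, hS1, ⊥, Submodule.fg_bot, bot_le, ?_⟩
    intro n hn
    obtain ⟨r, rfl⟩ := I.mkQ_surjective n
    have hr : r ∈ J := hn
    rw [hJ] at hr
    have : I.mkQ r = 0 := (Submodule.Quotient.mk_eq_zero I).2 hr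
    rw [this, smul_zero]
    exact Submodule.zero_mem _
  · have hlt : I < J := lt_of_le_of_ne hIJ (Ne.symm hJ)
    obtain ⟨s, hs, F, hFG, hFJ, hF⟩ := h2 J hlt
    refine ⟨s, hs, F.map I.mkQ, hFG.map _, ?_, ?_⟩
    · rw [Submodule.map_le_iff_le_comap]
      exact hFJ
    · intro n hn
      obtain ⟨r, rfl⟩ := I.mkQ_surjective n
      have hr : r ∈ J := hn
      have := hF r hr
      rw [← map_smul I.mkQ]
      exact Submodule.mem_map_of_mem this
end
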